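/- Let F be a field, d a positive natural number, and B a d × d matrix over F that is diagonalizable as B = Q Λ Q⁻¹, where Q is an invertible d × d matrix and Λ is the diagonal matrix with pairwise distinct diagonal entries λ_0, …, λ_{d−1}. Let c ∈ F^d be a vector such that every entry of e = Q⁻¹ c is nonzero. Then the Krylov matrix K(B, c) = [c | Bc | B²c | ⋯ | B^{d−1}c] is invertible. -/

import Mathlib

/-! Conjugation passes through Krylov matrices, `K(QΛQ⁻¹, c) = Q · K(Λ, Q⁻¹c)`, and column `j` of
`K(Λ, e)` is `(λᵢ ^ j · eᵢ)ᵢ`, so `K(Λ, e) = diag(e) · V(λ)` with `V(λ)` the Vandermonde matrix of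
the eigenvalues. Both factors are invertible when the `eᵢ` are nonzero and the `λᵢ` distinct. -/

open Matrix

/-- The Krylov matrix `K(B, c) = [c | Bc | B²c | ⋯ | B^(d−1)c]`: the `d × d` matrix whose
`j`-th column is `B^j c`. -/
def krylov {F : Type*} [Field F] {d : ℕ} (B : Matrix (Fin d) (Fin d) F) (c : Fin d → F) :
    Matrix (Fin d) (Fin d) F :=
  Matrix.of fun i j => (B ^ (j : ℕ)).mulVec c i

section

variable {F : Type*} [Field F] {d : ℕ}

theorem krylov_conj {Q : Matrix (Fin d) (Fin d) F} (hQ : IsUnit Q)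
    (A : Matrix (Fin d) (Fin d) F) (c : Fin d → F) :
    krylov (Q * A * Q⁻¹) c = Q * krylov A (Q⁻¹ *ᵥ c) := by
  have hpow (j : ℕ) : (Q * A * Q⁻¹) ^ j = Q * A ^ j * Q⁻¹ := by
    simpa only [coe_units_inv, IsUnit.unit_spec] using Units.conj_pow hQ.unit A j
  ext i j
  rw [krylov, of_apply, hpow, ← mulVec_mulVec, ← mulVec_mulVec]
  rfl

theorem krylov_diagonal (lam e : Fin d → F) :
    krylov (diagonal lam) e = diagonal e * vandermonde lam := by
  ext i j
  simp [krylov, diagonal_pow, mulVec_diagonal, diagonal_mul, vandermonde_apply, mul_comm]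

theorem isUnit_krylov_diagonal {lam e : Fin d → F} (hlam : Function.Injective lam)
    (he : ∀ i, e i ≠ 0) : IsUnit (krylov (diagonal lam) e) := by
  rw [isUnit_iff_isUnit_det, krylov_diagonal, det_mul, det_diagonal, isUnit_iff_ne_zero]
  exact mul_ne_zero (Finset.prod_ne_zero_iff.mpr fun i _ => he i)
    (det_vandermonde_ne_zero_iff.mpr hlam)

end

theorem stmt10_general {F : Type*} [Field F] {d : ℕ}
    (B Q : Matrix (Fin d) (Fin d) F) (lam : Fin d → F) (hQ : IsUnit Q)
    (hB : B = Q * Matrix.diagonal lam * Q⁻¹) (hlam : Function.Injective lam)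
    (c : Fin d → F) (he : ∀ i, Q⁻¹.mulVec c i ≠ 0) :
    IsUnit (krylov B c) := by
  rw [hB, krylov_conj hQ]
  exact hQ.mul (isUnit_krylov_diagonal hlam he)

theorem stmt10 {F : Type*} [Field F] {d : ℕ} (hd : 0 < d)
    (B Q : Matrix (Fin d) (Fin d) F) (lam : Fin d → F) (hQ : IsUnit Q)
    (hB : B = Q * Matrix.diagonal lam * Q⁻¹) (hlam : Function.Injective lam)
    (c : Fin d → F) (he : ∀ i, Q⁻¹.mulVec c i ≠ 0) :
    IsUnit (krylov B c) :=
  stmt10_general B Q lam hQ hB hlam c he
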